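/- For every λ ∈ ℂ, the 3-dimensional algebra T³₀₂(λ) with basis e₁,e₂,e₃ and nonzero products e₁e₁ = e₂, e₁e₂ = λe₃, e₂e₁ = e₃ is a nilpotent terminal algebra generated by e₁. -/
import Mathlib


/-- For a multiplication `P` and a linear operator `A`, the bracket
`[A,P](x,y) = A(P(x,y)) - P(A(x),y) - P(x,A(y))`. -/
def opBr {V : Type*} [AddCommGroup V] (P : V → V → V) (A : V → V) (x y : V) : V :=
  A (P x y) - P (A x) y - P x (A y)

/-- For bilinear `B` and multiplication `P`, the bracket `[B,P]`. -/
def biBr {V : Type*} [AddCommGroup V] (B P : V → V → V) (x y z : V) : V :=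
  B (P x y) z + B x (P y z) + B y (P x z) - P (B x y) z - P x (B y z) - P y (B x z)

/-- An algebra with multiplication `P` is terminal if `[[[P,a],P],P] = 0` for all `a`,
where `[P,a]` is the left multiplication operator `P a`. -/
def IsTerminalMul {V : Type*} [AddCommGroup V] (P : V → V → V) : Prop :=
  ∀ a x y z, biBr (opBr P (P a)) P x y z = 0

/-- `prods mul n` is the set of all products of `n + 1` elements, in any association. -/
def prods {V : Type*} (mul : V → V → V) : ℕ → Set V
  | 0 => Set.univ
  | n + 1 => ⋃ i : Fin (n + 1),
      {z | ∃ a ∈ prods mul i.1, ∃ b ∈ prods mul (n - i.1), z = mul a b}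

/-- An algebra is nilpotent if all products of sufficiently many elements vanish. -/
def IsNilpotentMul {V : Type*} [Zero V] (mul : V → V → V) : Prop :=
  ∃ n : ℕ, ∀ x ∈ prods mul n, x = 0

/-- The algebra `(V, mul)` is generated by `g`: every submodule containing `g` and closed
under multiplication is all of `V`. -/
def GeneratedBy (K : Type*) {V : Type*} [Field K] [AddCommGroup V] [Module K V]
    (mul : V → V → V) (g : V) : Prop :=
  ∀ S : Submodule K V, (∀ x ∈ S, ∀ y ∈ S, mul x y ∈ S) → g ∈ S → ∀ v, v ∈ S


/-- The 3-dimensional algebra `T³₀₂(λ)` with nonzero products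
`e₁e₁ = e₂`, `e₁e₂ = λe₃`, `e₂e₁ = e₃`. -/
def mulT302 (lam : ℂ) (u v : Fin 3 → ℂ) : Fin 3 → ℂ :=
  ![0, u 0 * v 0, lam * (u 0 * v 1) + u 1 * v 0]

lemma p1 (lam : ℂ) : ∀ x ∈ prods (mulT302 lam) 1, x 0 = 0 := by
  intro x hx
  simp only [prods, Set.mem_iUnion, Set.mem_setOf_eq] at hx
  obtain ⟨i, a, _, b, _, rfl⟩ := hx
  simp [mulT302]

lemma p2 (lam : ℂ) : ∀ x ∈ prods (mulT302 lam) 2, x 0 = 0 ∧ x 1 = 0 := by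
  intro x hx
  simp only [prods, Set.mem_iUnion, Set.mem_setOf_eq] at hx
  obtain ⟨i, a, ha, b, hb, rfl⟩ := hx
  refine ⟨by simp [mulT302], ?_⟩
  fin_cases i
  · have := p1 lam b hb
    simp_all [mulT302]
  · have := p1 lam a ha
    simp_all [mulT302]

/-- For every `λ ∈ ℂ`, `T³₀₂(λ)` is a nilpotent terminal algebra generated by `e₁`. -/
theorem T302_terminal_nilpotent_oneGenerated (lam : ℂ) :
    IsTerminalMul (mulT302 lam) ∧ IsNilpotentMul (mulT302 lam) ∧
      GeneratedBy ℂ (mulT302 lam) ![1, 0, 0] := by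
  refine ⟨?_, ?_, ?_⟩
  · intro a x y z
    funext i
    fin_cases i <;> simp [biBr, opBr, mulT302]
  · refine ⟨3, ?_⟩
    intro x hx
    simp only [prods, Set.mem_iUnion, Set.mem_setOf_eq] at hx
    obtain ⟨i, a, ha, b, hb, rfl⟩ := hx
    funext j
    fin_cases j
    · simp [mulT302]
    · fin_cases i
      · have := p2 lam b hb
        simp_all [mulT302]
      · have := p1 lam a ha
        simp_all [mulT302]
      · have := p2 lam a ha
        simp_all [mulT302]
    · fin_cases i
      · have := p2 lam b hb
        simp_all [mulT302]
      · have h1 := p1 lam a ha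
        have h2 := p1 lam b hb
        simp_all [mulT302]
      · have := p2 lam a ha
        simp_all [mulT302]
  · intro S hclosed hg v
    set e1 : Fin 3 → ℂ := ![1, 0, 0] with he1
    have he2 : mulT302 lam e1 e1 ∈ S := hclosed _ hg _ hg
    have he3 : mulT302 lam (mulT302 lam e1 e1) e1 ∈ S := hclosed _ he2 _ hg
    have : v = v 0 • e1 + v 1 • mulT302 lam e1 e1 + v 2 • mulT302 lam (mulT302 lam e1 e1) e1 := by
      funext j
      fin_cases j <;> simp [mulT302, he1]
    rw [this]
    exact S.add_mem (S.add_mem (S.smul_mem _ hg) (S.smul_mem _ he2)) (S.smul_mem _ he3)
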